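/- Let f(x) = (sin(πx)/(πx))² + (d/dx[sin(πx)/(πx)])²/π². Then ∫_{-∞}^{∞} f(x) dx = 4/3 and f(0) = 1, so the ratio ‖f‖₁/f(0) = 4/3. -/

import Mathlib

open MeasureTheory Real Set

/-- The normalized sinc function `sin(πx)/(πx)`. -/
noncomputable def sincPi (x : ℝ) : ℝ :=
  if x = 0 then 1 else Real.sin (Real.pi * x) / (Real.pi * x)

/-- The "lid" of the Fejér kernel. -/
noncomputable def fejerLid (x : ℝ) : ℝ :=
  sincPi x ^ 2 + (deriv sincPi x) ^ 2 / Real.pi ^ 2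

/-!
`fejerLid` is the Fourier transform of `fejerLidHat ξ = (2/3)(1 - |ξ|)₊² (|ξ| + 2)`: this
function is even and supported in `[-1, 1]`, so its transform is
`2 ∫₀¹ (2/3)(t³ - 3t + 2) cos(2πxt) dt`, which three integrations by parts evaluate in closed
form. Since `fejerLidHat ≥ 0`, `|fejerLid x| ≤ ∫ fejerLidHat = fejerLid 0 = 1`; with the decay
`fejerLid x ≤ 1/x²` for `|x| ≥ 1` this makes `fejerLid` integrable, and Fourier inversion at `0`
gives `∫ fejerLid = fejerLidHat 0 = 4/3`. Finally `fejerLid ≥ 0` removes the absolute value.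
-/

open scoped FourierTransform

-- No differentiability is assumed: `deriv_comp_neg` holds for junk derivatives as well.
theorem Function.Even.deriv_zero {F : Type*} [NormedAddCommGroup F] [NormedSpace ℝ F]
    {f : ℝ → F} (hf : f.Even) : deriv f 0 = 0 := by
  have h := deriv_comp_neg f (0 : ℝ)
  rwa [show (fun x => f (-x)) = f from funext hf, neg_zero, eq_neg_iff_add_eq_zero,
    ← two_smul ℝ, smul_eq_zero, or_iff_right two_ne_zero] at h

section FourierAtZero

variable {V E : Type*} [NormedAddCommGroup V] [InnerProductSpace ℝ V] [MeasurableSpace V]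
  [BorelSpace V] [FiniteDimensional ℝ V] [NormedAddCommGroup E] [NormedSpace ℂ E]

theorem Real.fourier_apply_zero (f : V → E) : 𝓕 f 0 = ∫ v, f v := by
  simp [Real.fourier_eq]

theorem Real.fourierInv_apply_zero (f : V → E) : 𝓕⁻ f 0 = ∫ v, f v := by
  simp [Real.fourierInv_eq]

end FourierAtZero

theorem Real.fourier_ofReal_of_even {g : ℝ → ℝ} (hg : g.Even) (hg_int : Integrable g)
    (w : ℝ) :
    𝓕 (fun v => (g v : ℂ)) w = ↑(∫ v, g v * cos (2 * π * v * w)) := by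
  set F : ℝ → ℂ := fun v => 𝐞 (-(v * w)) • (g v : ℂ)
  have hF : Integrable F := by
    simpa [F, mul_comm] using
      (Real.fourierIntegral_convergent_iff (μ := volume) w).2 hg_int.ofReal
  have hF_apply (v : ℝ) : F v = Complex.exp (↑(-(2 * π * v * w)) * Complex.I) * g v := by
    simp only [F, Circle.smul_def, Real.fourierChar_apply, smul_eq_mul]
    push_cast; ring_nf
  have hF_re (v : ℝ) : (F v).re = g v * cos (2 * π * v * w) := by
    rw [hF_apply, Complex.re_mul_ofReal, Complex.exp_ofReal_mul_I_re, cos_neg, mul_comm]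
  have hF_im (v : ℝ) : (F v).im = -(g v * sin (2 * π * v * w)) := by
    rw [hF_apply, Complex.im_mul_ofReal, Complex.exp_ofReal_mul_I_im, sin_neg, neg_mul, mul_comm]
  have hodd : ∫ v, g v * sin (2 * π * v * w) = 0 := by
    have h := integral_neg_eq_self (fun v => g v * sin (2 * π * v * w)) volume
    simp only [hg _, mul_neg, neg_mul, sin_neg, integral_neg] at h
    linarith
  rw [Real.fourier_real_eq]
  apply Complex.ext
  · refine (integral_re hF).symm.trans ?_
    simp only [RCLike.re_to_complex, hF_re, Complex.ofReal_re]
  · refine (integral_im hF).symm.trans ?_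
    simp only [RCLike.im_to_complex, hF_im, integral_neg, hodd, Complex.ofReal_im, neg_zero]

theorem sincPi_eq_sinc (x : ℝ) : sincPi x = sinc (π * x) := by
  simp [sincPi, sinc_apply, pi_ne_zero]

theorem even_sincPi : sincPi.Even := fun x => by
  simp only [sincPi_eq_sinc, mul_neg, sinc_neg]

theorem hasDerivAt_sincPi_of_ne_zero {x : ℝ} (hx : x ≠ 0) :
    HasDerivAt sincPi ((π * x * cos (π * x) - sin (π * x)) / (π * x ^ 2)) x := by
  have hπx : π * x ≠ 0 := mul_ne_zero pi_ne_zero hx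
  have hsin : HasDerivAt (fun y => sin (π * y)) (cos (π * x) * π) x := by
    simpa using ((hasDerivAt_id' x).const_mul π).sin
  have hquot := hsin.div ((hasDerivAt_id' x).const_mul π) (by simpa using hπx)
  have heq : sincPi =ᶠ[nhds x] fun y => sin (π * y) / (π * y) := by
    filter_upwards [eventually_ne_nhds hx] with y hy
    simp [sincPi, hy]
  refine (hquot.congr_of_eventuallyEq heq).congr_deriv ?_
  field_simp

theorem continuous_sincPi : Continuous sincPi := by
  rw [funext sincPi_eq_sinc]
  fun_prop

theorem fejerLid_zero : fejerLid 0 = 1 := by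
  simp [fejerLid, even_sincPi.deriv_zero, sincPi]

theorem fejerLid_of_ne_zero {x : ℝ} (hx : x ≠ 0) :
    fejerLid x =
      ((π * x) ^ 2 - π * x * sin (2 * (π * x)) + sin (π * x) ^ 2) / (π * x) ^ 4 := by
  have hπx : π * x ≠ 0 := mul_ne_zero pi_ne_zero hx
  rw [fejerLid, (hasDerivAt_sincPi_of_ne_zero hx).deriv, sincPi, if_neg hx, sin_two_mul]
  field_simp
  linear_combination (π ^ 2 * x ^ 2) * sin_sq_add_cos_sq (π * x)

theorem fejerLid_nonneg (x : ℝ) : 0 ≤ fejerLid x := by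
  unfold fejerLid; positivity

theorem integral_cubic : ∫ t in (0 : ℝ)..1, 2 / 3 * (t ^ 3 - 3 * t + 2) = 1 / 2 := by
  have hc {f : ℝ → ℝ} (hf : Continuous f) : IntervalIntegrable f volume 0 1 :=
    hf.intervalIntegrable 0 1
  rw [intervalIntegral.integral_const_mul, intervalIntegral.integral_add (hc (by fun_prop))
    (hc (by fun_prop)), intervalIntegral.integral_sub (hc (by fun_prop)) (hc (by fun_prop)),
    intervalIntegral.integral_const_mul]
  norm_num

theorem integral_cubic_mul_cos {a : ℝ} (ha : a ≠ 0) :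
    ∫ t in (0 : ℝ)..1, 2 / 3 * (t ^ 3 - 3 * t + 2) * cos (a * t) =
      2 / a ^ 2 - 4 * sin a / a ^ 3 + 4 * (1 - cos a) / a ^ 4 := by
  -- `p sin/a + p' cos/a² - p'' sin/a³ - p''' cos/a⁴` with `p t = 2/3 (t³ - 3t + 2)`
  set F : ℝ → ℝ := fun t => 2 / 3 * (t ^ 3 - 3 * t + 2) * sin (a * t) / a +
    (2 * t ^ 2 - 2) * cos (a * t) / a ^ 2 - 4 * t * sin (a * t) / a ^ 3 - 4 * cos (a * t) / a ^ 4
  have hF (t : ℝ) : HasDerivAt F (2 / 3 * (t ^ 3 - 3 * t + 2) * cos (a * t)) t := by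
    have hsin : HasDerivAt (fun t => sin (a * t)) (cos (a * t) * a) t := by
      simpa using ((hasDerivAt_id' t).const_mul a).sin
    have hcos : HasDerivAt (fun t => cos (a * t)) (-sin (a * t) * a) t := by
      simpa using ((hasDerivAt_id' t).const_mul a).cos
    have hp : HasDerivAt (fun t : ℝ => 2 / 3 * (t ^ 3 - 3 * t + 2)) (2 * t ^ 2 - 2) t := by
      refine ((((hasDerivAt_id' t).pow 3).sub ((hasDerivAt_id' t).const_mul 3)).add_const
        2).const_mul (2 / 3 : ℝ) |>.congr_deriv ?_
      ring
    have hq : HasDerivAt (fun t : ℝ => 2 * t ^ 2 - 2) (4 * t) t := by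
      refine (((hasDerivAt_id' t).pow 2).const_mul 2).sub_const 2 |>.congr_deriv ?_
      ring
    refine ((((hp.mul hsin).div_const a).add ((hq.mul hcos).div_const (a ^ 2))).sub
      ((((hasDerivAt_id' t).const_mul 4).mul hsin).div_const (a ^ 3))).sub
      ((hcos.const_mul 4).div_const (a ^ 4)) |>.congr_deriv ?_
    field_simp
    ring
  rw [intervalIntegral.integral_eq_sub_of_hasDerivAt (fun t _ => hF t)
    (Continuous.intervalIntegrable (by fun_prop) _ _)]
  simp only [F]
  field_simp
  norm_num
  ring

noncomputable def fejerLidHat (ξ : ℝ) : ℝ :=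
  2 / 3 * max (1 - |ξ|) 0 ^ 2 * (|ξ| + 2)

theorem continuous_fejerLidHat : Continuous fejerLidHat := by
  unfold fejerLidHat; fun_prop

theorem fejerLidHat_nonneg (ξ : ℝ) : 0 ≤ fejerLidHat ξ := by
  unfold fejerLidHat; positivity

theorem even_fejerLidHat : fejerLidHat.Even := fun ξ => by
  simp only [fejerLidHat, abs_neg]

theorem fejerLidHat_zero : fejerLidHat 0 = 4 / 3 := by
  norm_num [fejerLidHat]

theorem fejerLidHat_of_one_le_abs {ξ : ℝ} (h : 1 ≤ |ξ|) : fejerLidHat ξ = 0 := by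
  simp [fejerLidHat, max_eq_right (sub_nonpos.2 h)]

theorem fejerLidHat_of_mem_Icc {ξ : ℝ} (h : ξ ∈ Icc 0 1) :
    fejerLidHat ξ = 2 / 3 * (ξ ^ 3 - 3 * ξ + 2) := by
  rw [fejerLidHat, abs_of_nonneg h.1, max_eq_left (sub_nonneg.2 h.2)]
  ring

theorem integrable_fejerLidHat : Integrable fejerLidHat := by
  refine continuous_fejerLidHat.integrable_of_hasCompactSupport
    (HasCompactSupport.intro (isCompact_Icc (a := -1) (b := 1)) fun ξ hξ => ?_)
  exact fejerLidHat_of_one_le_abs (not_le.1 fun h => hξ (abs_le.1 h)).le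

theorem integral_fejerLidHat_mul_cos (w : ℝ) :
    ∫ ξ, fejerLidHat ξ * cos (2 * π * ξ * w) =
      2 * ∫ t in (0 : ℝ)..1, 2 / 3 * (t ^ 3 - 3 * t + 2) * cos (2 * π * w * t) := by
  have h_abs (ξ : ℝ) : fejerLidHat ξ * cos (2 * π * ξ * w) =
      fejerLidHat |ξ| * cos (2 * π * |ξ| * w) := by
    rcases abs_choice ξ with h | h
    · rw [h]
    · rw [h, even_fejerLidHat, mul_neg, neg_mul, cos_neg]
  rw [integral_congr_ae (.of_forall h_abs),
    integral_comp_abs (f := fun t => fejerLidHat t * cos (2 * π * t * w)),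
    setIntegral_eq_of_subset_of_forall_sdiff_eq_zero measurableSet_Ioi
      (Ioc_subset_Ioi_self (a := 1)), intervalIntegral.integral_of_le zero_le_one]
  · congr 1
    refine setIntegral_congr_fun measurableSet_Ioc fun t ht => ?_
    rw [fejerLidHat_of_mem_Icc (Ioc_subset_Icc_self ht)]
    ring_nf
  · rintro t ⟨ht0, ht1⟩
    have h1t : 1 < t := lt_of_not_ge fun h => ht1 ⟨ht0, h⟩
    rw [fejerLidHat_of_one_le_abs (h1t.le.trans (le_abs_self t)), zero_mul]

theorem fourier_fejerLidHat (x : ℝ) : 𝓕 (fun ξ => (fejerLidHat ξ : ℂ)) x = fejerLid x := by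
  rw [Real.fourier_ofReal_of_even even_fejerLidHat integrable_fejerLidHat,
    integral_fejerLidHat_mul_cos]
  congr 1
  rcases eq_or_ne x 0 with rfl | hx
  · simp only [mul_zero, zero_mul, cos_zero, mul_one, integral_cubic, fejerLid_zero]
    norm_num
  · have hπx : π * x ≠ 0 := mul_ne_zero pi_ne_zero hx
    rw [integral_cubic_mul_cos (by simpa [mul_assoc] using hπx), fejerLid_of_ne_zero hx,
      sin_sq_eq_half_sub]
    field_simp
    ring_nf

theorem integral_fejerLidHat : ∫ ξ, fejerLidHat ξ = 1 := by
  have h := fourier_fejerLidHat 0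
  rw [Real.fourier_apply_zero, integral_complex_ofReal, fejerLid_zero] at h
  exact_mod_cast h

theorem abs_fejerLid_le_one (x : ℝ) : |fejerLid x| ≤ 1 := by
  calc |fejerLid x| = ‖𝓕 (fun ξ => (fejerLidHat ξ : ℂ)) x‖ := by
        rw [fourier_fejerLidHat, Complex.norm_real, Real.norm_eq_abs]
    _ ≤ ∫ ξ, ‖(fejerLidHat ξ : ℂ)‖ := by
        rw [Real.fourier_real_eq]
        refine (norm_integral_le_integral_norm _).trans_eq ?_
        simp only [Circle.norm_smul]
    _ = 1 := by
        simp only [Complex.norm_real, Real.norm_eq_abs, abs_of_nonneg (fejerLidHat_nonneg _),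
          integral_fejerLidHat]

theorem fejerLid_le_inv_sq {x : ℝ} (hx : 1 ≤ |x|) : fejerLid x ≤ (x ^ 2)⁻¹ := by
  have hx0 : x ≠ 0 := by rintro rfl; norm_num at hx
  have hx2 : 1 ≤ x ^ 2 := by nlinarith [sq_abs x]
  set u := π * x with hu
  have hu2 : 1 ≤ u ^ 2 := by rw [hu, mul_pow]; nlinarith [pi_gt_three]
  have hnum : u ^ 2 - u * sin (2 * u) + sin u ^ 2 ≤ 3 * u ^ 2 := by
    nlinarith [neg_abs_le (u * sin (2 * u)), abs_mul u (sin (2 * u)), abs_sin_le_one (2 * u),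
      sin_sq_le_one u, abs_nonneg u, sq_abs u]
  rw [fejerLid_of_ne_zero hx0, div_le_iff₀ (by positivity)]
  calc u ^ 2 - u * sin (2 * u) + sin u ^ 2 ≤ 3 * u ^ 2 := hnum
    _ ≤ π ^ 2 * u ^ 2 := by gcongr; nlinarith [pi_gt_three]
    _ = (x ^ 2)⁻¹ * u ^ 4 := by rw [hu]; field_simp

theorem fejerLid_le (x : ℝ) : fejerLid x ≤ 2 * (1 + x ^ 2)⁻¹ := by
  rw [← div_eq_mul_inv, le_div_iff₀ (by positivity)]
  rcases le_total |x| 1 with hx | hx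
  · have hx2 : x ^ 2 ≤ 1 := by nlinarith [sq_abs x, abs_nonneg x]
    nlinarith [(abs_le.1 (abs_fejerLid_le_one x)).2, fejerLid_nonneg x]
  · have h := fejerLid_le_inv_sq hx
    have hx2 : 1 ≤ x ^ 2 := by nlinarith [sq_abs x]
    have h' := mul_le_mul_of_nonneg_right h (sq_nonneg x)
    rw [inv_mul_cancel₀ (by positivity)] at h'
    nlinarith [fejerLid_nonneg x]

theorem measurable_fejerLid : Measurable fejerLid := by
  have := measurable_deriv sincPi
  have := continuous_sincPi.measurable
  unfold fejerLid
  fun_prop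

theorem integrable_fejerLid : Integrable fejerLid := by
  refine (integrable_inv_one_add_sq.const_mul 2).mono' measurable_fejerLid.aestronglyMeasurable
    (.of_forall fun x => ?_)
  rw [Real.norm_eq_abs, abs_of_nonneg (fejerLid_nonneg x)]
  exact fejerLid_le x

theorem integral_fejerLid : ∫ x, fejerLid x = 4 / 3 := by
  have hF_int : Integrable (𝓕 fun ξ => (fejerLidHat ξ : ℂ)) := by
    rw [funext fourier_fejerLidHat]
    exact integrable_fejerLid.ofReal
  have h := integrable_fejerLidHat.ofReal.fourierInv_fourier_eq hF_int
    (Complex.continuous_ofReal.comp continuous_fejerLidHat).continuousAt (v := 0)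
  rw [funext fourier_fejerLidHat, Real.fourierInv_apply_zero, integral_complex_ofReal,
    fejerLidHat_zero] at h
  exact_mod_cast h

theorem fejer_lid_integral :
    (∫ x : ℝ, fejerLid x) = 4 / 3 ∧ fejerLid 0 = 1 ∧
      (∫ x : ℝ, |fejerLid x|) / fejerLid 0 = 4 / 3 := by
  refine ⟨integral_fejerLid, fejerLid_zero, ?_⟩
  simp_rw [abs_of_nonneg (fejerLid_nonneg _)]
  rw [integral_fejerLid, fejerLid_zero, div_one]
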